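/- Let x₁, …, x_N be distinct complex numbers and D₁, …, D_N nonzero complex numbers, with c_k = Σᵢ Dᵢ xᵢ^k. Suppose b₀, …, b_M ∈ ℂ with M < N and b_M ≠ 0 satisfy Σ_{l=0}^{M} b_l c_{j+l} = 0 for all j = 0, …, N−1. Then this leads to a contradiction; i.e., no nonzero polynomial of degree less than N annihilates the moment sequence in this Hankel sense. -/

import Mathlib

/-!
Let `p = ∑ₗ bₗ tˡ`. Expanding the moments, the `j`-th Hankel equation reads
`∑ᵢ Dᵢ p(xᵢ) xᵢʲ = 0`, so for `j < N` the vector `(Dᵢ p(xᵢ))ᵢ` is killed by the Vandermonde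
matrix of the distinct nodes and vanishes. As `Dᵢ ≠ 0`, `p` has the `N` distinct roots `xᵢ`,
which is impossible for a nonzero polynomial of degree `M < N`.
-/

open Polynomial Finset

section

variable {R : Type*} [CommRing R]

theorem sum_mul_moment_eq_sum_mul_eval {ι : Type*} [Fintype ι] (D x : ι → R) (b : ℕ → R)
    (s : Finset ℕ) (j : ℕ) :
    ∑ l ∈ s, b l * ∑ i, D i * x i ^ (j + l) =
      ∑ i, D i * (∑ l ∈ s, C (b l) * X ^ l).eval (x i) * x i ^ j := by
  simp only [eval_finsetSum, eval_mul, eval_C, eval_pow, eval_X, Finset.mul_sum,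
    Finset.sum_mul]
  rw [Finset.sum_comm]
  refine Finset.sum_congr rfl fun i _ => Finset.sum_congr rfl fun l _ => ?_
  ring

theorem natDegree_sum_range_C_mul_X_pow_le (b : ℕ → R) (M : ℕ) :
    (∑ l ∈ range (M + 1), C (b l) * X ^ l).natDegree ≤ M :=
  natDegree_sum_le_of_forall_le _ _ fun l hl =>
    (natDegree_C_mul_X_pow_le (b l) l).trans (Nat.lt_succ_iff.mp (mem_range.mp hl))

theorem coeff_sum_range_C_mul_X_pow_self (b : ℕ → R) (M : ℕ) :
    (∑ l ∈ range (M + 1), C (b l) * X ^ l).coeff M = b M := by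
  simp [coeff_C_mul, coeff_X_pow]

theorem eq_zero_of_forall_sum_mul_pow_eq_zero [IsDomain R] {N : ℕ} {x : Fin N → R}
    (hx : Function.Injective x) {y : Fin N → R} (hy : ∀ j < N, ∑ i, y i * x i ^ j = 0) :
    y = 0 :=
  Matrix.eq_zero_of_vecMul_eq_zero (Matrix.det_vandermonde_ne_zero_iff.mpr hx) <|
    funext fun j => hy j j.isLt

end

theorem prony_minimality (N : ℕ) (x D : Fin N → ℂ) (hx : Function.Injective x)
    (hD : ∀ i, D i ≠ 0) (c : ℕ → ℂ) (hc : ∀ k, c k = ∑ i, D i * x i ^ k)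
    (M : ℕ) (hM : M < N) (b : ℕ → ℂ) (hbM : b M ≠ 0)
    (hker : ∀ j < N, ∑ l ∈ Finset.range (M + 1), b l * c (j + l) = 0) :
    False := by
  set p : ℂ[X] := ∑ l ∈ range (M + 1), C (b l) * X ^ l
  have hweighted : (fun i => D i * p.eval (x i)) = 0 :=
    eq_zero_of_forall_sum_mul_pow_eq_zero hx fun j hj => by
      simpa only [hc, sum_mul_moment_eq_sum_mul_eval] using hker j hj
  have hroot (i : Fin N) : p.eval (x i) = 0 :=
    (mul_eq_zero.mp (congrFun hweighted i)).resolve_left (hD i)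
  have hp : p = 0 := eq_zero_of_natDegree_lt_card_of_eval_eq_zero p hx hroot <| by
    simpa using (natDegree_sum_range_C_mul_X_pow_le b M).trans_lt hM
  have hcoeff : p.coeff M = b M := coeff_sum_range_C_mul_X_pow_self b M
  exact hbM <| by rw [← hcoeff, hp, coeff_zero]
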